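/- For every prime power m and every integer k ≥ 3, the size L of any k-colored sum-free set in (ℤ_m)^n is at most Γ_{m,k}^n, where Γ_{m,k} = min_{0<γ<1} (1+γ+…+γ^{m−1})/γ^{(m−1)/k}. -/

import Mathlib

/-
Tao's slice-rank method plus the tensor power trick. Put `q = p ^ l` and shift the first colour
by `1`, so that a sum-free tuple becomes one whose colour sum is `-1` exactly on the diagonal. By
Lucas' theorem `C(s, q - 1) ≢ 0 (mod p)` iff `s ≡ -1 (mod q)`, so the `ZMod p`-valued tensor
`T j = ∏_t C(∑_i val (x_{i, j_i} t), q - 1)` is diagonal with nonzero diagonal, and such a tensor on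
`J^k` has slice rank at least `|J|`. Vandermonde's identity writes `T` as a sum of products
`∏_i ∏_t C(val (x_{i, j_i} t), a_{i,t})` with `∑_i a_{i,t} = q - 1` for each `t`; some colour has
degree `∑_t a_{i,t} ≤ (q - 1)|ι| / k`, which bounds the slice rank by
`k · #{b : ι → Fin q | k ∑ b ≤ (q - 1)|ι|} ≤ k (∑_{i<q} γ^i)^|ι| / γ^((q - 1)|ι| / k)`.
Applied to the `r`-th tensor power of the sum-free set, as `r → ∞`, this removes the factor `k`.
-/

open Finset Function

section SliceRank

variable {F : Type*} [Field F]

theorem Submodule.exists_mem_finrank_le_card_support [DecidableEq F] {J : Type*} [Fintype J]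
    (V : Submodule F (J → F)) : ∃ h ∈ V, Module.finrank F V ≤ #{j | h j ≠ 0} := by
  set S : Set ℕ := (fun v : J → F => #{j | v j ≠ 0}) '' V
  have hS : BddAbove S := ⟨Fintype.card J, by rintro _ ⟨v, -, rfl⟩; exact card_le_univ _⟩
  obtain ⟨h, hV, hh⟩ : sSup S ∈ S := Nat.sSup_mem ⟨_, 0, V.zero_mem, rfl⟩ hS
  have hmax : ∀ v ∈ V, #{j | v j ≠ 0} ≤ #{j | h j ≠ 0} := fun v hv =>
    (le_csSup hS ⟨v, hv, rfl⟩).trans_eq hh.symm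
  set s : Finset J := {j | h j ≠ 0}
  -- a vector of `V` vanishing on `s` can be added to `h` without cancellation
  have hinj : ∀ v ∈ V, (∀ j ∈ s, v j = 0) → v = 0 := by
    intro v hv hvs
    by_contra hv0
    obtain ⟨j₀, hj₀⟩ := Function.ne_iff.1 hv0
    have hsub : s ⊆ ({j | (h + v) j ≠ 0} : Finset J) := fun j hj => by
      simpa [hvs j hj] using (mem_filter.1 hj).2
    have hj₀s : j₀ ∉ s := fun hj => hj₀ (hvs j₀ hj)
    have hhj₀ : h j₀ = 0 := by simpa [s] using hj₀s
    have hssub : s ⊂ ({j | (h + v) j ≠ 0} : Finset J) :=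
      (ssubset_iff_of_subset hsub).2 ⟨j₀, by simpa [hhj₀] using hj₀, hj₀s⟩
    exact (card_lt_card hssub).not_ge (hmax _ (V.add_mem hV hv))
  refine ⟨h, hV, ?_⟩
  let restrict : V →ₗ[F] (s → F) := LinearMap.funLeft F F Subtype.val ∘ₗ V.subtype
  have : Injective restrict := by
    rw [← LinearMap.ker_eq_bot, LinearMap.ker_eq_bot']
    intro v hv
    exact Subtype.ext (hinj v v.2 fun j hj => congrFun hv ⟨j, hj⟩)
  simpa using LinearMap.finrank_le_finrank_of_injective this

theorem exists_dotProduct_eq_zero_card_le [DecidableEq F] {J ρ : Type*} [Fintype J]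
    (R : Finset ρ) (u : ρ → J → F) :
    ∃ h : J → F, (∀ r ∈ R, h ⬝ᵥ u r = 0) ∧ Fintype.card J ≤ #{j | h j ≠ 0} + #R := by
  let A : Matrix R J F := Matrix.of fun r => u r
  obtain ⟨h, hker, hcard⟩ := A.mulVecLin.ker.exists_mem_finrank_le_card_support
  refine ⟨h, fun r hr => ?_, ?_⟩
  · rw [dotProduct_comm]
    exact congrFun (LinearMap.mem_ker.1 hker) ⟨r, hr⟩
  · have hrank := A.mulVecLin.finrank_range_add_finrank_ker
    have hrange := Submodule.finrank_le (LinearMap.range A.mulVecLin)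
    simp only [Module.finrank_fintype_fun_eq_card, Fintype.card_coe] at hrank hrange
    omega

theorem Matrix.card_le_of_diagonal_eq_mul {J K : Type*} [Fintype J] [DecidableEq J] [Fintype K]
    (d : J → F) (hd : ∀ j, d j ≠ 0) (U : Matrix J K F) (V : Matrix K J F)
    (h : Matrix.diagonal d = U * V) : Fintype.card J ≤ Fintype.card K := by
  classical
  calc Fintype.card J = Fintype.card {j // d j ≠ 0} :=
        Fintype.card_congr (Equiv.subtypeUnivEquiv hd).symm
    _ = (Matrix.diagonal d).rank := (Matrix.rank_diagonal d).symm
    _ ≤ U.rank := h ▸ Matrix.rank_mul_le_left U V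
    _ ≤ Fintype.card K := U.rank_le_card_width

theorem card_le_card_of_diagonal_eq_sum_slices_two {J ρ : Type*} [Fintype J] {R : Finset ρ}
    {c : ρ → Fin 2} {f : ρ → J → F} {g : ρ → (Fin 2 → J) → F}
    (hg : ∀ r ∈ R, DependsOn (g r) {c r}ᶜ)
    (hdiag : ∀ j : Fin 2 → J, ∑ r ∈ R, f r (j (c r)) * g r j ≠ 0 ↔ ∃ z, ∀ i, j i = z) :
    Fintype.card J ≤ #R := by
  classical
  set T : (Fin 2 → J) → F := fun j => ∑ r ∈ R, f r (j (c r)) * g r j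
  set u : ρ → J → F := fun r a => if c r = 0 then f r a else g r ![a, a]
  set v : ρ → J → F := fun r b => if c r = 0 then g r ![b, b] else f r b
  have hT : ∀ a b, T ![a, b] = ∑ r ∈ R, u r a * v r b := by
    refine fun a b => sum_congr rfl fun r hr => ?_
    have hg' := fun j j' => @hg r hr j j'
    simp only [Set.mem_compl_singleton_iff] at hg'
    by_cases hc : c r = 0
    · simp only [u, v, hc, if_true]
      rw [hg' ![a, b] ![b, b] fun i hi => by fin_cases i <;> simp_all]
      rfl
    · have hc1 : c r = 1 := by omega
      simp only [u, v, hc1]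
      rw [hg' ![a, b] ![a, a] fun i hi => by fin_cases i <;> simp_all, mul_comm]
      rfl
  have hconst : ∀ a b : J, (∃ z, ∀ i, ![a, b] i = z) ↔ a = b := fun a b =>
    ⟨fun ⟨z, hz⟩ => by simpa using (hz 0).trans (hz 1).symm,
      fun h => ⟨a, by simp [h, Fin.forall_fin_two]⟩⟩
  have hUV : Matrix.diagonal (fun a => T ![a, a]) =
      Matrix.of (fun a (r : R) => u r a) * Matrix.of (fun (r : R) b => v r b) := by
    ext a b
    rw [Matrix.mul_apply, Matrix.diagonal_apply]
    simp only [Matrix.of_apply]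
    rw [sum_coe_sort R fun r => u r a * v r b, ← hT]
    split_ifs with hab
    · rw [hab]
    · exact (not_not.1 (mt (hdiag ![a, b]).1 (by rwa [hconst]))).symm
  refine (Matrix.card_le_of_diagonal_eq_mul _ (fun a => (hdiag ![a, a]).2 ((hconst a a).2 rfl)) _ _
    hUV).trans_eq (Fintype.card_coe R)

theorem Fin.exists_forall_snoc_eq_iff {n : ℕ} {J : Type*} (j : Fin n → J) (z : J) :
    (∃ w, ∀ i, (Fin.snoc j z : Fin (n + 1) → J) i = w) ↔ ∀ i, j i = z := by
  constructor
  · rintro ⟨w, hw⟩ i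
    have hz := hw (Fin.last n)
    rw [Fin.snoc_last] at hz
    simpa [hz] using hw i.castSucc
  · intro hj
    refine ⟨z, fun i => ?_⟩
    induction i using Fin.lastCases with
    | last => exact Fin.snoc_last _ _
    | cast i => rw [Fin.snoc_castSucc, hj]

theorem sum_mul_snoc_ne_zero_iff {n : ℕ} [NeZero n] {J : Type*} [Fintype J]
    {T : (Fin (n + 1) → J) → F} (hT : ∀ j, T j ≠ 0 ↔ ∃ z, ∀ i, j i = z) (h : J → F)
    (j : Fin n → {z // h z ≠ 0}) :
    ∑ z, h z * T (Fin.snoc (fun i => (j i : J)) z) ≠ 0 ↔ ∃ w, ∀ i, j i = w := by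
  have hT' : ∀ z, T (Fin.snoc (fun i => (j i : J)) z) ≠ 0 ↔ ∀ i, (j i : J) = z := fun z => by
    rw [hT, Fin.exists_forall_snoc_eq_iff]
  constructor
  · intro hne
    obtain ⟨z, -, hz⟩ := exists_ne_zero_of_sum_ne_zero hne
    exact ⟨⟨z, left_ne_zero_of_mul hz⟩,
      fun i => Subtype.ext ((hT' z).1 (right_ne_zero_of_mul hz) i)⟩
  · rintro ⟨w, hw⟩
    rw [sum_eq_single (w : J) (fun z _ hzw => ?_) (by simp)]
    · exact mul_ne_zero w.2 ((hT' w).2 fun i => by rw [hw])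
    · by_contra hne
      exact hzw (((hT' z).1 (right_ne_zero_of_mul hne) 0).symm.trans (by rw [hw]))

theorem sum_mul_sum_slices_snoc {n : ℕ} {J ρ : Type*} [Fintype J] {R : Finset ρ}
    {c : ρ → Fin (n + 1)} {c' : ρ → Fin n} {f : ρ → J → F} {g : ρ → (Fin (n + 1) → J) → F}
    (hc' : ∀ r ∈ R, c r ≠ Fin.last n → (c' r).castSucc = c r)
    (hg : ∀ r ∈ R, DependsOn (g r) {c r}ᶜ) {h : J → F}
    (hh : ∀ r ∈ R, c r = Fin.last n → h ⬝ᵥ f r = 0) (j : Fin n → J) :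
    ∑ z, h z * ∑ r ∈ R, f r ((Fin.snoc j z : Fin (n + 1) → J) (c r)) * g r (Fin.snoc j z) =
      ∑ r ∈ R with c r ≠ Fin.last n, f r (j (c' r)) * ∑ z, h z * g r (Fin.snoc j z) := by
  simp_rw [mul_sum]
  rw [sum_comm, ← sum_filter_not_add_sum_filter _
    (fun r => c r = Fin.last n), sum_eq_zero (s := {r ∈ R | c r = Fin.last n}), add_zero]
  · refine sum_congr rfl fun r hr => ?_
    obtain ⟨hrR, hne⟩ := mem_filter.1 hr
    simp only [← hc' r hrR hne, Fin.snoc_castSucc, mul_left_comm (h _)]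
  · intro r hr
    obtain ⟨hrR, hlast⟩ := mem_filter.1 hr
    rcases isEmpty_or_nonempty J with hJ | ⟨⟨z₀⟩⟩
    · simp
    have hgz : ∀ z, g r (Fin.snoc j z) = g r (Fin.snoc j z₀) := fun z => hg r hrR fun i hi => by
      induction i using Fin.lastCases with
      | last => simp [hlast] at hi
      | cast i => simp only [Fin.snoc_castSucc]
    simp only [hlast, Fin.snoc_last, hgz, ← mul_assoc, ← sum_mul]
    exact mul_eq_zero_of_left (hh r hrR hlast) _

theorem card_le_card_of_diagonal_eq_sum_slices {n : ℕ} (hn : 2 ≤ n) {J ρ : Type*} [Fintype J]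
    {R : Finset ρ} {c : ρ → Fin n} {f : ρ → J → F} {g : ρ → (Fin n → J) → F}
    (hg : ∀ r ∈ R, DependsOn (g r) {c r}ᶜ)
    (hdiag : ∀ j : Fin n → J, ∑ r ∈ R, f r (j (c r)) * g r j ≠ 0 ↔ ∃ z, ∀ i, j i = z) :
    Fintype.card J ≤ #R := by
  induction n, hn using Nat.le_induction generalizing J R f with
  | base => exact card_le_card_of_diagonal_eq_sum_slices_two hg hdiag
  | succ n hn ih =>
    classical
    have : NeZero n := ⟨by omega⟩
    -- contracting the last coordinate against `h` kills the slices in that coordinate and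
    -- leaves a diagonal tensor on `(support h)^n`
    obtain ⟨h, hh, hcard⟩ := exists_dotProduct_eq_zero_card_le {r ∈ R | c r = Fin.last n} f
    let c' : ρ → Fin n := fun r => if hr : c r = Fin.last n then 0 else (c r).castPred hr
    have hc' : ∀ r ∈ R, c r ≠ Fin.last n → (c' r).castSucc = c r := fun r _ hr => by
      simp [c', hr]
    have hcard' := ih (J := {z // h z ≠ 0}) (R := {r ∈ R | c r ≠ Fin.last n}) (c := c')
      (f := fun r z => f r z) (g := fun r j => ∑ z, h z * g r (Fin.snoc (fun i => (j i : J)) z))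
      ?_ fun j => ?_
    · rw [Fintype.card_subtype] at hcard'
      simp only [ne_eq] at hcard' hcard
      have := card_filter_add_card_filter_not (s := R) (fun r => c r = Fin.last n)
      omega
    · intro r hr j j' hjj
      refine sum_congr rfl fun z _ => congrArg _ (hg r (mem_filter.1 hr).1 fun i hi => ?_)
      induction i using Fin.lastCases with
      | last => simp only [Fin.snoc_last]
      | cast i =>
        simp only [Fin.snoc_castSucc]
        refine congrArg Subtype.val (hjj i fun hic => hi ?_)
        simp only [Set.mem_singleton_iff] at hic ⊢
        rw [hic, hc' r (mem_filter.1 hr).1 (mem_filter.1 hr).2]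
    · rw [← sum_mul_snoc_ne_zero_iff hdiag h j,
        sum_mul_sum_slices_snoc hc' hg fun r hr hl => hh r (mem_filter.2 ⟨hr, hl⟩)]

theorem exists_sum_slices_eq_sum_prod {n : ℕ} [NeZero n] {D J : Type*} [Fintype D] [DecidableEq D]
    (P : Finset (Fin n → D)) (φ : Fin n → D → J → F) (w : D → ℕ) {W : ℕ}
    (hP : ∀ a ∈ P, ∑ i, w (a i) ≤ W) :
    ∃ g : Fin n × D → (Fin n → J) → F, (∀ r, DependsOn (g r) {r.1}ᶜ) ∧
      ∀ j, ∑ a ∈ P, ∏ i, φ i (a i) (j i) =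
        ∑ r ∈ univ ×ˢ ({d | n * w d ≤ W} : Finset D), φ r.1 r.2 (j r.1) * g r j := by
  -- each monomial is charged to a coordinate where its weight is smallest
  choose i₀ hi₀ using fun a : Fin n → D => Finite.exists_min fun i => w (a i)
  let key : (Fin n → D) → Fin n × D := fun a => (i₀ a, a (i₀ a))
  have hkey : ∀ a ∈ P, key a ∈ univ ×ˢ ({d | n * w d ≤ W} : Finset D) := fun a ha => by
    have := card_nsmul_le_sum univ (fun i => w (a i)) _ fun i _ => hi₀ a i
    simp only [card_univ, Fintype.card_fin, smul_eq_mul] at this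
    simpa [key] using this.trans (hP a ha)
  refine ⟨fun r j => ∑ a ∈ P with key a = r, ∏ i ∈ univ.erase r.1, φ i (a i) (j i),
    fun r j j' hjj => sum_congr rfl fun a _ => prod_congr rfl fun i hi => ?_, fun j => ?_⟩
  · rw [hjj i (by simpa using (mem_erase.1 hi).1)]
  · rw [← sum_fiberwise_of_maps_to hkey]
    refine sum_congr rfl fun r _ => ?_
    rw [mul_sum]
    refine sum_congr rfl fun a ha => ?_
    obtain rfl := (mem_filter.1 ha).2
    exact (mul_prod_erase univ (fun i => φ i (a i) (j i)) (mem_univ _)).symm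

theorem card_le_mul_card_of_diagonal_eq_sum_prod {n : ℕ} (hn : 2 ≤ n) {D J : Type*} [Fintype D]
    [DecidableEq D] [Fintype J] (P : Finset (Fin n → D)) (φ : Fin n → D → J → F) (w : D → ℕ)
    {W : ℕ} (hP : ∀ a ∈ P, ∑ i, w (a i) ≤ W)
    (hdiag : ∀ j : Fin n → J, ∑ a ∈ P, ∏ i, φ i (a i) (j i) ≠ 0 ↔ ∃ z, ∀ i, j i = z) :
    Fintype.card J ≤ n * #{d | n * w d ≤ W} := by
  have : NeZero n := ⟨by omega⟩
  obtain ⟨g, hg, hsum⟩ := exists_sum_slices_eq_sum_prod P φ w hP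
  have := card_le_card_of_diagonal_eq_sum_slices hn (c := Prod.fst) (f := fun r => φ r.1 r.2)
    (fun r _ => hg r) fun j => by rw [← hsum]; exact hdiag j
  simpa using this

end SliceRank

theorem Nat.choose_pow_sub_one_ne_zero_iff {p : ℕ} [Fact p.Prime] (l s : ℕ) :
    ((s.choose (p ^ l - 1) : ℕ) : ZMod p) ≠ 0 ↔ s % p ^ l = p ^ l - 1 := by
  induction l generalizing s with
  | zero => simp [Nat.mod_one]
  | succ l ih =>
    have hp := (Fact.out : p.Prime).pos
    have hpl := pow_pos hp l
    -- the base-`p` digits of `p ^ (l + 1) - 1` are `p - 1` followed by those of `p ^ l - 1`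
    have hsplit : p ^ (l + 1) - 1 = (p - 1) + p * (p ^ l - 1) := by
      rw [pow_succ', Nat.mul_sub, mul_one]; have := Nat.le_mul_of_pos_right p hpl; omega
    have hmod : ((p - 1) + p * (p ^ l - 1)) % p = p - 1 := by
      rw [Nat.add_mul_mod_self_left, Nat.mod_eq_of_lt (by omega)]
    have hdiv : ((p - 1) + p * (p ^ l - 1)) / p = p ^ l - 1 := by
      rw [Nat.add_mul_div_left _ _ hp, Nat.div_eq_of_lt (by omega), zero_add]
    have hlucas := (ZMod.natCast_eq_natCast_iff _ _ p).2
      (Choose.choose_modEq_choose_mod_mul_choose_div_nat (n := s) (k := p ^ (l + 1) - 1))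
    rw [hsplit, hmod, hdiv] at hlucas
    have hdigit : ((s % p).choose (p - 1) : ZMod p) ≠ 0 ↔ s % p = p - 1 := by
      rcases (Nat.lt_or_ge (s % p) (p - 1)) with hlt | hge
      · simp [Nat.choose_eq_zero_of_lt hlt, hlt.ne]
      · have : s % p = p - 1 := by have := Nat.mod_lt s hp; omega
        simp [this]
    have hunique := Nat.div_mod_unique (a := (p - 1) + p * (p ^ l - 1)) (c := s % p)
      (d := s / p % p ^ l) hp
    rw [hmod, hdiv, and_iff_left (Nat.mod_lt s hp)] at hunique
    rw [hsplit, hlucas, Nat.cast_mul, mul_ne_zero_iff, hdigit, ih, pow_succ', Nat.mod_mul,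
      ← hunique, eq_comm (a := s % p), eq_comm (a := s / p % p ^ l), and_comm]

theorem ZMod.choose_sum_val_ne_zero_iff {p : ℕ} [Fact p.Prime] {l : ℕ} {κ : Type*} [Fintype κ]
    (v : κ → ZMod (p ^ l)) :
    (((∑ i, (v i).val).choose (p ^ l - 1) : ℕ) : ZMod p) ≠ 0 ↔ ∑ i, v i = -1 := by
  have hq : 1 ≤ p ^ l := Nat.one_le_pow _ _ (Fact.out : p.Prime).pos
  rw [Nat.choose_pow_sub_one_ne_zero_iff, ← Nat.mod_eq_of_lt (Nat.sub_lt hq one_pos),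
    ← ZMod.natCast_eq_natCast_iff', Nat.cast_sub hq]
  simp

theorem Nat.choose_sum_eq_sum_prod_choose {m : ℕ} :
    ∀ {k r : ℕ} (s : Fin k → ℕ), r < m →
      (∑ i, s i).choose r = ∑ a : Fin k → Fin m with ∑ i, (a i : ℕ) = r, ∏ i, (s i).choose (a i)
  | 0, r, s, _ => by rcases r with _ | r <;> simp
  | k + 1, r, s, hr => by
    rw [Fin.sum_univ_succ, Nat.add_choose_eq, Nat.sum_antidiagonal_eq_sum_range_succ_mk,
      sum_filter, ← (Fin.consEquiv fun _ => Fin m).sum_comp, Fintype.sum_prod_type]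
    simp only [Fin.consEquiv_apply, Fin.sum_univ_succ, Fin.prod_univ_succ, Fin.cons_zero,
      Fin.cons_succ]
    rw [Fin.sum_univ_eq_sum_range (fun t => ∑ a : Fin k → Fin m,
        if t + ∑ i, (a i : ℕ) = r then (s 0).choose t * ∏ i, (s i.succ).choose (a i) else 0),
      ← sum_subset (range_subset_range.2 (show r + 1 ≤ m by omega)) fun t _ ht =>
        sum_eq_zero fun a _ => if_neg (by simp at ht; omega)]
    refine sum_congr rfl fun t ht => ?_
    rw [Nat.choose_sum_eq_sum_prod_choose (r := r - t) _ ((Nat.sub_le r t).trans_lt hr),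
      mul_sum, sum_filter]
    have ht : t ≤ r := Nat.lt_succ_iff.1 (mem_range.1 ht)
    exact sum_congr rfl fun a _ => if_congr (by omega) rfl rfl

theorem Nat.prod_choose_sum_eq_sum_prod_prod_choose {q k : ℕ} (hq : 0 < q) {ι : Type*}
    [Fintype ι] [DecidableEq ι] (s : Fin k → ι → ℕ) :
    ∏ t, (∑ i, s i t).choose (q - 1) = ∑ a : Fin k → ι → Fin q with ∀ t, ∑ i, (a i t : ℕ) = q - 1,
      ∏ i, ∏ t, (s i t).choose (a i t) := by
  simp_rw [Nat.choose_sum_eq_sum_prod_choose _ (Nat.sub_lt hq one_pos), prod_univ_sum]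
  refine sum_equiv (Equiv.piComm _) (fun a => by simp [Equiv.piComm]) fun a _ => prod_comm

def IsColoredSumFree {G J : Type*} [AddCommMonoid G] {k : ℕ} (x : Fin k → J → G) : Prop :=
  ∀ j : Fin k → J, ∑ i, x i (j i) = 0 ↔ ∃ c, ∀ i, j i = c

theorem IsColoredSumFree.pi {G J ι : Type*} [AddCommMonoid G] {k : ℕ} {x : Fin k → J → ι → G}
    (hx : IsColoredSumFree x) (σ : Type*) :
    IsColoredSumFree fun i (j : σ → J) (st : σ × ι) => x i (j st.1) st.2 := by
  intro j
  have hs : ∀ s, (∀ t, ∑ i, x i (j i s) t = 0) ↔ ∃ c, ∀ i, j i s = c := fun s => by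
    rw [← hx]; simp [funext_iff, Finset.sum_apply]
  simp only [funext_iff, Finset.sum_apply, Prod.forall, Pi.zero_apply, hs, Classical.skolem]
  exact exists_congr fun _ => forall_comm

theorem IsColoredSumFree.card_le {p : ℕ} [Fact p.Prime] {l k : ℕ} (hk : 2 ≤ k) {ι J : Type*}
    [Fintype ι] [DecidableEq ι] [Fintype J] {x : Fin k → J → ι → ZMod (p ^ l)}
    (hx : IsColoredSumFree x) :
    Fintype.card J ≤
      k * #{b : ι → Fin (p ^ l) | k * ∑ t, (b t : ℕ) ≤ (p ^ l - 1) * Fintype.card ι} := by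
  have hq : 0 < p ^ l := pow_pos (Fact.out : p.Prime).pos l
  have : NeZero k := ⟨by omega⟩
  let y : Fin k → J → ι → ZMod (p ^ l) := fun i z => x i z - if i = 0 then 1 else 0
  have hy : ∀ j : Fin k → J, ∑ i, y i (j i) = ∑ i, x i (j i) - 1 := fun j => by
    simp [y, sum_sub_distrib]
  refine card_le_mul_card_of_diagonal_eq_sum_prod hk
    ({a : Fin k → ι → Fin (p ^ l) | ∀ t, ∑ i, (a i t : ℕ) = p ^ l - 1} : Finset _)
    (fun i d z => ∏ t, ((y i z t).val.choose (d t) : ZMod p)) (fun d => ∑ t, (d t : ℕ))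
    (fun a ha => ?_) fun j => ?_
  · rw [sum_comm, sum_congr rfl fun t _ => (mem_filter.1 ha).2 t, sum_const, card_univ,
      smul_eq_mul, mul_comm]
  · have hexp := congrArg (Nat.cast : ℕ → ZMod p)
      (Nat.prod_choose_sum_eq_sum_prod_prod_choose hq fun i t => (y i (j i) t).val)
    push_cast at hexp
    rw [← hexp, prod_ne_zero_iff]
    simp only [mem_univ, true_implies, ZMod.choose_sum_val_ne_zero_iff]
    rw [← hx j, ← sub_eq_neg_self, ← hy, funext_iff]
    simp only [Finset.sum_apply, Pi.neg_apply, Pi.one_apply]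

theorem card_filter_sum_le_mul_rpow_le {ι : Type*} [Fintype ι] [DecidableEq ι] (q : ℕ)
    {γ D : ℝ} (hγ0 : 0 < γ) (hγ1 : γ ≤ 1) :
    (#{b : ι → Fin q | (∑ t, (b t : ℕ) : ℝ) ≤ D} : ℝ) * γ ^ D ≤
      (∑ i ∈ range q, γ ^ i) ^ Fintype.card ι := by
  calc (#{b : ι → Fin q | (∑ t, (b t : ℕ) : ℝ) ≤ D} : ℝ) * γ ^ D
      = ∑ b : ι → Fin q with (∑ t, (b t : ℕ) : ℝ) ≤ D, γ ^ D := by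
        rw [sum_const, nsmul_eq_mul]
    _ ≤ ∑ b : ι → Fin q with (∑ t, (b t : ℕ) : ℝ) ≤ D, γ ^ (∑ t, (b t : ℕ)) :=
        sum_le_sum fun b hb => by
          rw [← Real.rpow_natCast]
          exact Real.rpow_le_rpow_of_exponent_ge hγ0 hγ1 (by exact_mod_cast (mem_filter.1 hb).2)
    _ ≤ ∑ b : ι → Fin q, γ ^ (∑ t, (b t : ℕ)) :=
        sum_le_sum_of_subset_of_nonneg (filter_subset _ _) fun _ _ _ => by positivity
    _ = (∑ i ∈ range q, γ ^ i) ^ Fintype.card ι := by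
        simp_rw [← prod_pow_eq_pow_sum]
        rw [← Fintype.prod_sum fun _ (v : Fin q) => γ ^ (v : ℕ),
          Fin.sum_univ_eq_sum_range (γ ^ ·), prod_const, card_univ]

theorem le_of_forall_pow_le_mul_pow {a b C : ℝ} (hb : 0 ≤ b) (h : ∀ r : ℕ, a ^ r ≤ C * b ^ r) :
    a ≤ b := by
  rcases hb.eq_or_lt with rfl | hb
  · simpa using h 1
  by_contra! hab
  obtain ⟨r, hr⟩ := pow_unbounded_of_one_lt C ((one_lt_div hb).2 hab)
  rw [div_pow, lt_div_iff₀ (pow_pos hb r)] at hr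
  exact (h r).not_gt hr

theorem stmt19_general (p l m k n L : ℕ) (hp : p.Prime) (hm : m = p ^ l) (hk : 3 ≤ k)
    (γ : ℝ) (hγ0 : 0 < γ) (hγ1 : γ < 1)
    (x : Fin k → Fin L → (Fin n → ZMod m))
    (hsf : ∀ j : Fin k → Fin L, ∑ i, x i (j i) = 0 ↔ ∃ c, ∀ i, j i = c) :
    (L : ℝ) ≤ ((∑ i ∈ Finset.range m, γ ^ i) / γ ^ (((m : ℝ) - 1) / k)) ^ n := by
  subst hm
  have : Fact p.Prime := ⟨hp⟩
  have hq : 1 ≤ p ^ l := Nat.one_le_pow _ _ hp.pos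
  set S := ∑ i ∈ range (p ^ l), γ ^ i
  set e : ℝ := (((p ^ l : ℕ) : ℝ) - 1) / k
  refine le_of_forall_pow_le_mul_pow (C := k) (by positivity) fun r => ?_
  have hsf' : IsColoredSumFree x := hsf
  have hcard := (hsf'.pi (Fin r)).card_le (by omega)
  have hcount := card_filter_sum_le_mul_rpow_le (ι := Fin r × Fin n) (p ^ l) hγ0 hγ1.le
    (D := e * (r * n : ℕ))
  simp only [Fintype.card_prod, Fintype.card_fun, Fintype.card_fin] at hcard hcount
  rw [Real.rpow_mul_natCast hγ0.le, ← le_div_iff₀ (by positivity), ← div_pow] at hcount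
  calc (L : ℝ) ^ r ≤ k * #{b : Fin r × Fin n → Fin (p ^ l) |
        k * ∑ t, (b t : ℕ) ≤ (p ^ l - 1) * (r * n)} := by exact_mod_cast hcard
    _ ≤ k * #{b : Fin r × Fin n → Fin (p ^ l) | (∑ t, (b t : ℕ) : ℝ) ≤ e * (r * n : ℕ)} := by
        gcongr with b
        intro hb
        rw [div_mul_eq_mul_div, le_div_iff₀ (by positivity), ← Nat.cast_pred hq]
        exact_mod_cast (mul_comm _ _).trans_le hb
    _ ≤ k * (S / γ ^ e) ^ (r * n) := by gcongr
    _ = k * ((S / γ ^ e) ^ n) ^ r := by rw [← pow_mul, mul_comm r n]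

theorem stmt19 (p l m k n L : ℕ) (hp : p.Prime) (hl : 1 ≤ l) (hm : m = p ^ l) (hk : 3 ≤ k)
    (γ : ℝ) (hγ0 : 0 < γ) (hγ1 : γ < 1)
    (hmin : ∀ γ' : ℝ, 0 < γ' → γ' < 1 →
      (∑ i ∈ Finset.range m, γ ^ i) / γ ^ (((m : ℝ) - 1) / k) ≤
        (∑ i ∈ Finset.range m, γ' ^ i) / γ' ^ (((m : ℝ) - 1) / k))
    (x : Fin k → Fin L → (Fin n → ZMod m))
    (hsf : ∀ j : Fin k → Fin L, ∑ i, x i (j i) = 0 ↔ ∃ c, ∀ i, j i = c) :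
    (L : ℝ) ≤ ((∑ i ∈ Finset.range m, γ ^ i) / γ ^ (((m : ℝ) - 1) / k)) ^ n :=
  stmt19_general p l m k n L hp hm hk γ hγ0 hγ1 x hsf
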